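/- Let p, q ∈ (1,∞), n a nonnegative integer, and r ∈ (−1, q−1]. Set u = q/(r+1), so 1/u = (r+1)/q ∈ (0,1]. Then ∫₀^{π_{p,q}/2} sin_{p,q}^{qn+r}(t) dt = [u·(1/u)_n / (q·(1/p* + 1/u)_n)] · π_{p,u}/2, where for u = 1 one uses the convention π_{p,1} = 2p* = 2p/(p−1). -/

import Mathlib

open Set MeasureTheory Filter

/-! Substituting `t = arcsin_{p,q} x` turns `∫₀^{π_{p,q}/2} sin_{p,q}^α` into
`∫₀¹ x^α (1 - x^q)^{-1/p} dx`, and `s = x^w` turns `∫₀¹ x^β (1 - x^w)^{b-1} dx` into the Beta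
integral `B((β+1)/w, b) / w`. Both sides of the formula are therefore Beta values with second
argument `1/p*`, whose first arguments `n + 1/u` and `1/u` differ by the integer `n`; the
functional equation of `Γ` turns that shift into the quotient of Pochhammer symbols. -/

/-- Generalized arcsine: `arcsin_{p,q}(x) = ∫₀ˣ (1 - tᵠ)^(-1/p) dt`. -/
noncomputable def gArcsin (p q x : ℝ) : ℝ := ∫ t in (0:ℝ)..x, (1 - t ^ q) ^ (-(1 / p))

/-- Generalized pi: `π_{p,q} = 2 ∫₀¹ (1 - tᵠ)^(-1/p) dt`. -/
noncomputable def gPi (p q : ℝ) : ℝ := 2 * gArcsin p q 1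

/-- `S` is the generalized sine `sin_{p,q}` (the inverse of `gArcsin p q` on `[0,1]`). -/
def IsGSin (p q : ℝ) (S : ℝ → ℝ) : Prop :=
  ∀ y ∈ Icc (0:ℝ) 1, S (gArcsin p q y) = y

/-- `C` is the generalized cosine `cos_{p,q}`, the derivative of `S = sin_{p,q}`
on `[0, π_{p,q}/2]`. -/
def IsGCos (p q : ℝ) (S C : ℝ → ℝ) : Prop :=
  ∀ x ∈ Icc (0:ℝ) (gPi p q / 2), HasDerivWithinAt S (C x) (Icc (0:ℝ) (gPi p q / 2)) x

open ProbabilityTheory (beta)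

section GeneralizedArcsine

variable {p q : ℝ}

lemma integrableOn_one_sub_rpow_rpow_neg_inv (hp : 1 < p) (hq : 1 ≤ q) :
    IntegrableOn (fun t : ℝ => (1 - t ^ q) ^ (-(1 / p))) (Icc 0 1) := by
  have hp0 : 0 < 1 / p := one_div_pos.mpr (by linarith)
  have hp1 : 1 / p < 1 := (div_lt_one (by linarith)).mpr hp
  have hdom : IntegrableOn (fun t : ℝ => (1 - t) ^ (-(1 / p))) (Ico 0 1) := by
    have := ((intervalIntegral.intervalIntegrable_rpow' (a := 0) (b := 1)
      (by linarith : -1 < -(1 / p))).comp_sub_left 1).symm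
    rw [sub_self, sub_zero, intervalIntegrable_iff_integrableOn_Ioc_of_le zero_le_one,
      ← integrableOn_Icc_iff_integrableOn_Ioc] at this
    exact this.mono_set Ico_subset_Icc_self
  rw [integrableOn_Icc_iff_integrableOn_Ico]
  refine Integrable.mono' hdom (Measurable.aestronglyMeasurable (by fun_prop)) ?_
  filter_upwards [ae_restrict_mem measurableSet_Ico] with t ⟨ht0, ht1⟩
  have htq : t ^ q ≤ t := Real.rpow_le_self_of_le_one ht0 ht1.le hq
  rw [Real.norm_of_nonneg (Real.rpow_nonneg (by linarith) _)]
  exact Real.rpow_le_rpow_of_nonpos (by linarith) (by linarith) (by linarith)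

lemma intervalIntegrable_one_sub_rpow_rpow_neg_inv (hp : 1 < p) (hq : 1 ≤ q) {a b : ℝ}
    (ha : a ∈ Icc (0:ℝ) 1) (hb : b ∈ Icc (0:ℝ) 1) :
    IntervalIntegrable (fun t : ℝ => (1 - t ^ q) ^ (-(1 / p))) volume a b :=
  ((integrableOn_one_sub_rpow_rpow_neg_inv hp hq).mono_set
    (uIcc_subset_Icc ha hb)).intervalIntegrable

lemma gArcsin_zero (p q : ℝ) : gArcsin p q 0 = 0 :=
  intervalIntegral.integral_same

lemma gPi_div_two (p q : ℝ) : gPi p q / 2 = gArcsin p q 1 := by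
  rw [gPi, mul_div_cancel_left₀ _ two_ne_zero]

lemma gArcsin_continuousOn (hp : 1 < p) (hq : 1 ≤ q) : ContinuousOn (gArcsin p q) (Icc 0 1) := by
  have h := integrableOn_one_sub_rpow_rpow_neg_inv hp hq
  rw [← uIcc_of_le zero_le_one] at h ⊢
  exact intervalIntegral.continuousOn_primitive_interval h

lemma gArcsin_strictMonoOn (hp : 1 < p) (hq : 1 ≤ q) :
    StrictMonoOn (gArcsin p q) (Icc 0 1) := by
  intro x hx y hy hxy
  have h0 : (0:ℝ) ∈ Icc (0:ℝ) 1 := left_mem_Icc.mpr zero_le_one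
  rw [gArcsin, gArcsin, ← intervalIntegral.integral_add_adjacent_intervals
    (intervalIntegrable_one_sub_rpow_rpow_neg_inv hp hq h0 hx)
    (intervalIntegrable_one_sub_rpow_rpow_neg_inv hp hq hx hy), lt_add_iff_pos_right]
  refine intervalIntegral.intervalIntegral_pos_of_pos_on
    (intervalIntegrable_one_sub_rpow_rpow_neg_inv hp hq hx hy) (fun t ht => ?_) hxy
  have : t ^ q < 1 := Real.rpow_lt_one (hx.1.trans ht.1.le) (ht.2.trans_le hy.2) (by linarith)
  exact Real.rpow_pos_of_pos (by linarith) _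

lemma gArcsin_hasDerivAt (hp : 1 < p) (hq : 1 ≤ q) {x : ℝ} (hx : x ∈ Ioo (0:ℝ) 1) :
    HasDerivAt (gArcsin p q) ((1 - x ^ q) ^ (-(1 / p))) x := by
  have hxq : x ^ q < 1 := Real.rpow_lt_one hx.1.le hx.2 (by linarith)
  refine intervalIntegral.integral_hasDerivAt_right
    (intervalIntegrable_one_sub_rpow_rpow_neg_inv hp hq (left_mem_Icc.mpr zero_le_one)
      (Ioo_subset_Icc_self hx))
    (Measurable.stronglyMeasurable (by fun_prop)).stronglyMeasurableAtFilter ?_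
  have h1 : ContinuousAt (fun t : ℝ => 1 - t ^ q) x :=
    continuousAt_const.sub (Real.continuousAt_rpow_const x q (Or.inl hx.1.ne'))
  exact h1.rpow_const (Or.inl (sub_pos.mpr hxq).ne')

lemma gArcsin_image_Ioo (hp : 1 < p) (hq : 1 ≤ q) :
    gArcsin p q '' Ioo 0 1 = Ioo 0 (gArcsin p q 1) := by
  refine (gArcsin_strictMonoOn hp hq).image_Ioo_subset.trans_eq ?_ |>.antisymm ?_
  · rw [gArcsin_zero]
  · simpa only [gArcsin_zero] using
      intermediate_value_Ioo zero_le_one (gArcsin_continuousOn hp hq)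

lemma integral_comp_of_isGSin (hp : 1 < p) (hq : 1 ≤ q) {S : ℝ → ℝ} (hS : IsGSin p q S)
    (g : ℝ → ℝ) :
    ∫ t in (0:ℝ)..(gPi p q / 2), g (S t) =
      ∫ x in Ioo (0:ℝ) 1, g x * (1 - x ^ q) ^ (-(1 / p)) := by
  have hpos : 0 < gArcsin p q 1 := by
    simpa only [gArcsin_zero] using gArcsin_strictMonoOn hp hq
      (left_mem_Icc.mpr zero_le_one) (right_mem_Icc.mpr zero_le_one) zero_lt_one
  rw [gPi_div_two, intervalIntegral.integral_of_le hpos.le, integral_Ioc_eq_integral_Ioo,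
    ← gArcsin_image_Ioo hp hq, integral_image_eq_integral_abs_deriv_smul measurableSet_Ioo
      (fun x hx => (gArcsin_hasDerivAt hp hq hx).hasDerivWithinAt)
      ((gArcsin_strictMonoOn hp hq).injOn.mono Ioo_subset_Icc_self)]
  refine setIntegral_congr_fun measurableSet_Ioo fun x hx => ?_
  have hxq : x ^ q < 1 := Real.rpow_lt_one hx.1.le hx.2 (by linarith)
  rw [hS x (Ioo_subset_Icc_self hx), smul_eq_mul,
    abs_of_pos (Real.rpow_pos_of_pos (by linarith) _), mul_comm]

end GeneralizedArcsine

section Beta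

lemma integral_rpow_mul_one_sub_rpow_eq_beta {a b : ℝ} (ha : 0 < a) (hb : 0 < b) :
    ∫ x in Ioo (0:ℝ) 1, x ^ (a - 1) * (1 - x) ^ (b - 1) = beta a b := by
  have h : Complex.betaIntegral a b =
      ((∫ x in Ioo (0:ℝ) 1, x ^ (a - 1) * (1 - x) ^ (b - 1) : ℝ) : ℂ) := by
    rw [Complex.betaIntegral, intervalIntegral.integral_of_le zero_le_one,
      integral_Ioc_eq_integral_Ioo, ← integral_complex_ofReal]
    refine setIntegral_congr_fun measurableSet_Ioo fun x hx => ?_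
    rw [Complex.ofReal_mul, Complex.ofReal_cpow hx.1.le,
      Complex.ofReal_cpow (sub_nonneg.mpr hx.2.le)]
    push_cast
    rfl
  rw [ProbabilityTheory.beta_eq_betaIntegralReal a b ha hb, h, Complex.ofReal_re]

lemma integral_mul_comp_rpow_Ioo_zero_one {w : ℝ} (hw : 0 < w) (g : ℝ → ℝ) :
    ∫ x in Ioo (0:ℝ) 1, w * x ^ (w - 1) * g (x ^ w) = ∫ s in Ioo (0:ℝ) 1, g s := by
  have himg : (fun x : ℝ => x ^ w) '' Ioo 0 1 = Ioo 0 1 := by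
    refine (image_subset_iff.mpr fun x hx => ?_).antisymm fun s hs => ?_
    · exact ⟨Real.rpow_pos_of_pos hx.1 _, Real.rpow_lt_one hx.1.le hx.2 hw⟩
    · refine ⟨s ^ w⁻¹, ⟨Real.rpow_pos_of_pos hs.1 _, ?_⟩, Real.rpow_inv_rpow hs.1.le hw.ne'⟩
      exact Real.rpow_lt_one hs.1.le hs.2 (inv_pos.mpr hw)
  conv_rhs => rw [← himg]
  rw [integral_image_eq_integral_abs_deriv_smul measurableSet_Ioo
    (fun x hx => (Real.hasDerivAt_rpow_const (Or.inl hx.1.ne')).hasDerivWithinAt)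
    ((Real.rpow_left_injOn hw.ne').mono fun x (hx : x ∈ Ioo (0:ℝ) 1) => hx.1.le)]
  refine setIntegral_congr_fun measurableSet_Ioo fun x hx => ?_
  rw [smul_eq_mul, abs_of_pos (mul_pos hw (Real.rpow_pos_of_pos hx.1 _))]

lemma integral_rpow_mul_one_sub_rpow_rpow {w β b : ℝ} (hw : 0 < w) (hβ : -1 < β) (hb : 0 < b) :
    ∫ x in Ioo (0:ℝ) 1, x ^ β * (1 - x ^ w) ^ (b - 1) = beta ((β + 1) / w) b / w := by
  have ha : 0 < (β + 1) / w := div_pos (by linarith) hw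
  rw [← integral_rpow_mul_one_sub_rpow_eq_beta ha hb, div_eq_inv_mul,
    ← integral_const_mul (μ := volume.restrict (Ioo (0:ℝ) 1))]
  conv_rhs => rw [← integral_mul_comp_rpow_Ioo_zero_one hw]
  refine setIntegral_congr_fun measurableSet_Ioo fun x hx => ?_
  have hpow : x ^ (w - 1) * (x ^ w) ^ ((β + 1) / w - 1) = x ^ β := by
    rw [← Real.rpow_mul hx.1.le, ← Real.rpow_add hx.1]
    congr 1
    field_simp
    ring
  rw [← hpow]
  field_simp

lemma gPi_div_two_eq_beta {p q : ℝ} (hp : 1 < p) (hq : 0 < q) :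
    gPi p q / 2 = beta (1 / q) (1 - 1 / p) / q := by
  have h := integral_rpow_mul_one_sub_rpow_rpow hq neg_one_lt_zero
    (sub_pos.mpr ((div_lt_one (by linarith)).mpr hp) : 0 < 1 - 1 / p)
  simp only [Real.rpow_zero, one_mul, zero_add, sub_sub_cancel_left] at h
  rw [gPi_div_two, gArcsin, intervalIntegral.integral_of_le zero_le_one,
    integral_Ioc_eq_integral_Ioo, h]

lemma Real.Gamma_add_nat_eq_ascPochhammer_mul {a : ℝ} (ha : 0 < a) (n : ℕ) :
    Real.Gamma (a + n) = (ascPochhammer ℝ n).eval a * Real.Gamma a := by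
  induction n with
  | zero => simp
  | succ k ih =>
    rw [Nat.cast_succ, ← add_assoc, Real.Gamma_add_one (by positivity), ih,
      ascPochhammer_succ_right]
    simp only [Polynomial.eval_mul, Polynomial.eval_add, Polynomial.eval_X,
      Polynomial.eval_natCast]
    ring

lemma beta_add_nat {a b : ℝ} (ha : 0 < a) (hb : 0 < b) (n : ℕ) :
    beta (a + n) b =
      (ascPochhammer ℝ n).eval a / (ascPochhammer ℝ n).eval (a + b) * beta a b := by
  have hab : 0 < a + b := add_pos ha hb
  rw [beta, beta, add_right_comm, Real.Gamma_add_nat_eq_ascPochhammer_mul ha,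
    Real.Gamma_add_nat_eq_ascPochhammer_mul hab]
  have := (ascPochhammer_pos n _ hab).ne'
  have := (Real.Gamma_pos_of_pos hab).ne'
  field_simp

end Beta

/-- Theorem 3.4, formula (3.3) (Wallis-type formula for `sin_{p,q}`): for
`r ∈ (-1, q-1]` and `1/u = (r+1)/q`,
`∫₀^{π_{p,q}/2} sin_{p,q}^{qn+r} t dt = (u (1/u)ₙ)/(q (1/p* + 1/u)ₙ) · π_{p,u}/2`.
(For `u = 1` one has `gPi p 1 = 2∫₀¹(1-t)^{-1/p} dt = 2p/(p-1) = 2p*`, the paper's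
convention `π_{p,1} := 2p*`.) -/
theorem stmt_8 (p q r : ℝ) (n : ℕ) (hp : 1 < p) (hq : 1 < q)
    (hr : r ∈ Ioc (-1 : ℝ) (q - 1))
    (u : ℝ) (hu : u = q / (r + 1))
    (S : ℝ → ℝ) (hS : IsGSin p q S) :
    ∫ t in (0:ℝ)..(gPi p q / 2), S t ^ (q * (n : ℝ) + r) =
      (u * (ascPochhammer ℝ n).eval (1 / u)) /
          (q * (ascPochhammer ℝ n).eval (1 / (p / (p - 1)) + 1 / u)) *
        (gPi p u / 2) := by
  have hq0 : 0 < q := by linarith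
  have hu0 : 0 < u := hu ▸ div_pos hq0 (by linarith [hr.1])
  have hinvu : 0 < 1 / u := one_div_pos.mpr hu0
  have hc : 0 < 1 - 1 / p := sub_pos.mpr ((div_lt_one (by linarith)).mpr hp)
  have hpstar : 1 / (p / (p - 1)) = 1 - 1 / p := by
    rw [one_div_div]
    field_simp
  have hlhs : ∫ t in (0:ℝ)..(gPi p q / 2), S t ^ (q * (n : ℝ) + r) =
      beta (1 / u + n) (1 - 1 / p) / q := by
    rw [integral_comp_of_isGSin hp hq.le hS (· ^ (q * (n : ℝ) + r)),
      ← sub_sub_cancel_left 1 (1 / p),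
      integral_rpow_mul_one_sub_rpow_rpow hq0 (by nlinarith [hr.1]) hc, hu]
    congr 2
    field_simp
    ring
  rw [hlhs, gPi_div_two_eq_beta hp hu0, hpstar, beta_add_nat hinvu hc, add_comm (1 - 1 / p)]
  have := (ascPochhammer_pos n _ (add_pos hinvu hc)).ne'
  field_simp
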